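/- The set-valued map G : ℝ ⇉ ℝ defined by G(t) = {t^{1/3}, t + sign(t)} (real cube root and sign function with sign(0) = 0) has compact values and satisfies the WCM condition, but is not monotone. -/
import Mathlib


/-- The real cube root: the unique real number whose cube is `t`,
equal to `sign t * |t| ^ (1/3)`. -/
noncomputable def cbrt (t : ℝ) : ℝ := Real.sign t * |t| ^ ((1:ℝ)/3)

lemma cbrt_cube (t : ℝ) : (cbrt t) ^ 3 = t := by
  have habs : (|t| ^ ((1:ℝ)/3)) ^ (3:ℕ) = |t| := by
    rw [← Real.rpow_natCast (|t| ^ ((1:ℝ)/3)) 3, ← Real.rpow_mul (abs_nonneg t)]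
    norm_num
  unfold cbrt
  rw [mul_pow, habs]
  rcases lt_trichotomy t 0 with h | h | h
  · rw [Real.sign_of_neg h, abs_of_neg h]; ring
  · simp [h]
  · rw [Real.sign_of_pos h, abs_of_pos h]; ring

lemma cbrt_mono : Monotone cbrt := by
  intro a b hab
  have h : (cbrt a) ^ 3 ≤ (cbrt b) ^ 3 := by rw [cbrt_cube, cbrt_cube]; exact hab
  have hm := Odd.strictMono_pow (R := ℝ) (Nat.odd_iff.mpr rfl : Odd 3)
  exact hm.le_iff_le.mp h

lemma sign_mono : Monotone Real.sign := by
  intro a b hab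
  rcases lt_trichotomy a 0 with ha | ha | ha <;>
    rcases lt_trichotomy b 0 with hb | hb | hb <;>
    simp_all [Real.sign_of_neg, Real.sign_of_pos, Real.sign_zero] <;> linarith

lemma add_sign_mono : Monotone (fun t : ℝ => t + Real.sign t) := fun a b hab =>
  add_le_add hab (sign_mono hab)

lemma mono_key {f : ℝ → ℝ} (hf : Monotone f) (s t : ℝ) : 0 ≤ (s - t) * (f s - f t) := by
  rcases le_total s t with h | h
  · have := hf h; nlinarith
  · have := hf h; nlinarith

theorem example_G_compact_wcm_not_monotone :
    ∀ G : ℝ → Set ℝ, (G = fun t => ({cbrt t, t + Real.sign t} : Set ℝ)) →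
    (∀ t, IsCompact (G t)) ∧
    (∀ s t : ℝ, ∀ v ∈ G s, ∃ w ∈ G t, 0 ≤ (s - t) * (v - w)) ∧
    (∃ s t : ℝ, ∃ v ∈ G s, ∃ w ∈ G t, (s - t) * (v - w) < 0) := by
  intro G hG
  subst hG
  refine ⟨fun t => (Set.toFinite _).isCompact, ?_, ?_⟩
  · intro s t v hv
    rcases hv with hv | hv
    · exact ⟨cbrt t, Or.inl rfl, by rw [hv]; exact mono_key cbrt_mono s t⟩
    · exact ⟨t + Real.sign t, Or.inr rfl, by
        simp only [Set.mem_singleton_iff] at hv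
        rw [hv]; exact mono_key add_sign_mono s t⟩
  · refine ⟨1, 1/8, cbrt 1, Or.inl rfl, (1:ℝ)/8 + Real.sign (1/8), Or.inr rfl, ?_⟩
    have h1 : cbrt 1 = 1 := by
      have h : cbrt 1 ^ 3 = 1 ^ 3 := by rw [cbrt_cube]; norm_num
      exact (Odd.strictMono_pow (R := ℝ) (Nat.odd_iff.mpr rfl : Odd 3)).injective h
    have h2 : Real.sign ((1:ℝ)/8) = 1 := Real.sign_of_pos (by norm_num)
    rw [h1, h2]; norm_num
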